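/- arXiv:1604.07911 — 4 statements merged into one kernel-verified Lean document; each statement's English description precedes it below -/
import Mathlib

section
/- Let π satisfy Assumption 1 with constants ε_π, δ_π, let n ≥ 1 and let x_1,...,x_n be reals with x_i ≥ -1 for all i. For any C ∈ (0, min(ε_π, 1/2)), if 0 < S_n/A_n² < C/2, then K_n^π ≥ (√C/6)·(S_n/A_n²)·π(S_n/A_n²)·exp((1-2C)·S_n²/(2·A_n²)). -/
/-!
Write `t = S_n / A_n²` and `u = √C / 6`, and integrate only over the window `t < ε < t / (1 - u)`.
There, `log (1 + v) ≥ v - v² / (2 (1 - ε))` for `v = ε x_i ≥ -ε` gives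
`∏ (1 + ε x_i) ≥ exp (ε S_n - ε² A_n² / (2 (1 - ε)))`. Since `ε` is within a factor `1 + O(√C)`
of the maximiser `t` of `ε S_n - ε² A_n² / 2` and `1 / (1 - ε) = 1 + O(C)`, this exponent is at
least `(1 - 2C) S_n² / (2 A_n²)`. Monotonicity of `ε π(ε)` gives
`π(ε) ≥ t π(t) / ε ≥ (1 - u) π(t)`, and the window has length `u t / (1 - u)`.
-/

open MeasureTheory Filter Set

/-- Partial sum `S_n = x_1 + ... + x_n`. -/
noncomputable def S (x : ℕ → ℝ) (n : ℕ) : ℝ := ∑ i ∈ Finset.range n, x i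

/-- Sum of squares `A_n² = x_1² + ... + x_n²`. -/
noncomputable def A2 (x : ℕ → ℝ) (n : ℕ) : ℝ := ∑ i ∈ Finset.range n, (x i) ^ 2

/-- Capital process of the Bayesian strategy with prior density `π`:
`K_n^π = ∫_0^1 ∏_{i=1}^n (1 + ε x_i) π(ε) dε`. -/
noncomputable def K (π : ℝ → ℝ) (x : ℕ → ℝ) (n : ℕ) : ℝ :=
  ∫ ε in Set.Ioo (0 : ℝ) 1, (∏ i ∈ Finset.range n, (1 + ε * x i)) * π ε

/-- Assumption 1: `π` is a prior density, bounded below by `δπ` near the origin,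
and `ε ↦ ε·π(ε)` is (weakly) increasing near the origin. -/
def Assumption1 (π : ℝ → ℝ) (επ δπ : ℝ) : Prop :=
  επ ∈ Set.Ioo (0 : ℝ) 1 ∧ 0 < δπ ∧
  (∀ ε ∈ Set.Icc (0 : ℝ) 1, 0 ≤ π ε) ∧
  MeasureTheory.IntegrableOn π (Set.Icc (0 : ℝ) 1) ∧
  (∀ ε ∈ Set.Ioo (0 : ℝ) επ, δπ ≤ π ε) ∧
  MonotoneOn (fun ε => ε * π ε) (Set.Ioo (0 : ℝ) επ)

lemma sub_sq_div_le_log_one_add {c v : ℝ} (hc0 : 0 ≤ c) (hc : c < 1) (hv : -c ≤ v) :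
    v - v ^ 2 / (2 * (1 - c)) ≤ Real.log (1 + v) := by
  rcases le_or_gt 0 v with hv0 | hv0
  · calc v - v ^ 2 / (2 * (1 - c)) ≤ v - v ^ 2 / (v + 2) := by gcongr; linarith
      _ = 2 * v / (v + 2) := by field_simp; ring
      _ ≤ Real.log (1 + v) := Real.le_log_one_add_of_nonneg hv0
  · have h1v : 0 < 1 + v := by linarith
    -- `τ ≤ sinh τ` at `τ = -log (1 + v) ≥ 0`
    have hsinh := Real.self_le_sinh_iff.2 (neg_nonneg.2 (Real.log_nonpos h1v.le (by linarith)))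
    rw [Real.sinh_eq, neg_neg, Real.exp_log h1v, Real.exp_neg, Real.exp_log h1v] at hsinh
    calc v - v ^ 2 / (2 * (1 - c)) ≤ v - v ^ 2 / (2 * (1 + v)) := by gcongr; linarith
      _ = ((1 + v) - (1 + v)⁻¹) / 2 := by field_simp; ring
      _ ≤ Real.log (1 + v) := by linarith

lemma exp_le_prod_one_add_mul {ι : Type*} (s : Finset ι) (x : ι → ℝ) (hx : ∀ i ∈ s, -1 ≤ x i)
    {ε : ℝ} (hε0 : 0 ≤ ε) (hε1 : ε < 1) :
    Real.exp (ε * ∑ i ∈ s, x i - ε ^ 2 * (∑ i ∈ s, x i ^ 2) / (2 * (1 - ε))) ≤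
      ∏ i ∈ s, (1 + ε * x i) := by
  have hsum : ε * ∑ i ∈ s, x i - ε ^ 2 * (∑ i ∈ s, x i ^ 2) / (2 * (1 - ε)) =
      ∑ i ∈ s, (ε * x i - (ε * x i) ^ 2 / (2 * (1 - ε))) := by
    simp only [Finset.mul_sum, Finset.sum_div, ← Finset.sum_sub_distrib, mul_pow]
  rw [hsum, Real.exp_sum]
  refine Finset.prod_le_prod (fun i _ => (Real.exp_pos _).le) fun i hi => ?_
  have hv : -ε ≤ ε * x i := by nlinarith [hx i hi]
  rw [← Real.exp_log (by linarith : 0 < 1 + ε * x i)]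
  exact Real.exp_le_exp.2 (sub_sq_div_le_log_one_add hε0 hε1 hv)

lemma one_sub_two_mul_mul_sq_le {C t ε : ℝ} (hC : C < 1 / 2) (ht : 0 < t) (htC : t < C / 2)
    (htε : t ≤ ε) (hεt : ε * (1 - √C / 6) ≤ t) :
    (1 - 2 * C) * t ^ 2 ≤ 2 * ε * t - ε ^ 2 / (1 - ε) := by
  have hC0 : 0 < C := by linarith
  have hr : √C ^ 2 = C := Real.sq_sqrt hC0.le
  have hr34 : √C < 3 / 4 := (Real.sqrt_lt' (by norm_num)).2 (by linarith)
  have hε87 : ε ≤ 8 / 7 * t := by nlinarith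
  have hεC : ε < 4 / 7 * C := by linarith
  have hgap : (ε - t) ^ 2 ≤ C / 36 * ε ^ 2 := by
    have h : ε - t ≤ √C / 6 * ε := by linarith
    calc (ε - t) ^ 2 ≤ (√C / 6 * ε) ^ 2 := pow_le_pow_left₀ (by linarith) h 2
      _ = C / 36 * ε ^ 2 := by rw [mul_pow, div_pow, hr]; ring
  -- `(1 - ε) (1 + 4C/5) ≥ (1 - 4C/7) (1 + 4C/5) = 1 + 8C(1 - 2C)/35 ≥ 1`
  have hdiv : ε ^ 2 / (1 - ε) ≤ (1 + 4 / 5 * C) * ε ^ 2 := by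
    rw [div_le_iff₀ (by linarith)]
    nlinarith [sq_nonneg ε, mul_nonneg (sq_nonneg ε) hC0.le]
  have hεsq : C * ε ^ 2 ≤ 64 / 49 * C * t ^ 2 := by
    have := pow_le_pow_left₀ (by linarith) hε87 2
    nlinarith
  nlinarith

lemma exp_one_sub_two_mul_sq_div_le_prod (n : ℕ) (x : ℕ → ℝ) (hx : ∀ i, -1 ≤ x i)
    {C ε : ℝ} (hC : C < 1 / 2) (hA : 0 < A2 x n) (hpos : 0 < S x n / A2 x n)
    (hup : S x n / A2 x n < C / 2) (htε : S x n / A2 x n ≤ ε)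
    (hεt : ε * (1 - √C / 6) ≤ S x n / A2 x n) :
    Real.exp ((1 - 2 * C) * (S x n) ^ 2 / (2 * A2 x n)) ≤ ∏ i ∈ Finset.range n, (1 + ε * x i) := by
  have hr : √C < 3 / 4 := (Real.sqrt_lt' (by norm_num)).2 (by linarith)
  have hε1 : ε < 1 := by nlinarith
  refine le_trans (Real.exp_le_exp.2 ?_)
    (exp_le_prod_one_add_mul _ x (fun i _ => hx i) (hpos.trans_le htε).le hε1)
  have hquad := one_sub_two_mul_mul_sq_le hC hpos hup htε hεt
  rw [← S, ← A2]
  calc (1 - 2 * C) * S x n ^ 2 / (2 * A2 x n)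
      = A2 x n / 2 * ((1 - 2 * C) * (S x n / A2 x n) ^ 2) := by field_simp
    _ ≤ A2 x n / 2 * (2 * ε * (S x n / A2 x n) - ε ^ 2 / (1 - ε)) := by gcongr
    _ = ε * S x n - ε ^ 2 * A2 x n / (2 * (1 - ε)) := by field_simp

lemma one_sub_mul_le_of_monotoneOn_mul {π : ℝ → ℝ} {a t ε u : ℝ}
    (hmono : MonotoneOn (fun ε => ε * π ε) (Ioo 0 a)) (ht : 0 < t) (htε : t ≤ ε)
    (hεa : ε < a) (hπt : 0 ≤ π t) (hεt : ε * (1 - u) ≤ t) : (1 - u) * π t ≤ π ε := by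
  have hε : 0 < ε := ht.trans_le htε
  have h : t * π t ≤ ε * π ε := hmono ⟨ht, htε.trans_lt hεa⟩ ⟨hε, hεa⟩ htε
  exact le_of_mul_le_mul_left (by nlinarith) hε

lemma mul_sub_le_setIntegral {f : ℝ → ℝ} {s : Set ℝ} {a b m : ℝ} (hab : a ≤ b)
    (hsub : Ioo a b ⊆ s) (hs : MeasurableSet s) (hf : IntegrableOn f s)
    (hf0 : ∀ x ∈ s, 0 ≤ f x) (hm : ∀ x ∈ Ioo a b, m ≤ f x) :
    m * (b - a) ≤ ∫ x in s, f x := by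
  calc m * (b - a) = m * volume.real (Ioo a b) := by rw [Real.volume_real_Ioo_of_le hab]
    _ ≤ ∫ x in Ioo a b, f x :=
      setIntegral_ge_of_const_le_real measurableSet_Ioo (by simp) hm (hf.mono_set hsub)
    _ ≤ ∫ x in s, f x :=
      setIntegral_mono_set hf ((ae_restrict_mem hs).mono hf0) hsub.eventuallyLE

lemma integrableOn_prod_one_add_mul_mul {ι : Type*} (s : Finset ι) (x : ι → ℝ) {π : ℝ → ℝ}
    (hπ : IntegrableOn π (Icc 0 1)) :
    IntegrableOn (fun ε => (∏ i ∈ s, (1 + ε * x i)) * π ε) (Ioo 0 1) :=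
  (hπ.continuousOn_mul (by fun_prop) isCompact_Icc).mono_set Ioo_subset_Icc_self

lemma prod_one_add_mul_nonneg {ι : Type*} (s : Finset ι) {x : ι → ℝ} (hx : ∀ i ∈ s, -1 ≤ x i)
    {ε : ℝ} (hε0 : 0 ≤ ε) (hε1 : ε ≤ 1) : 0 ≤ ∏ i ∈ s, (1 + ε * x i) :=
  Finset.prod_nonneg fun i hi => by nlinarith [hx i hi]

lemma mul_sub_le_K {π : ℝ → ℝ} (hπ0 : ∀ ε ∈ Icc (0 : ℝ) 1, 0 ≤ π ε)
    (hπ : IntegrableOn π (Icc 0 1)) (n : ℕ) {x : ℕ → ℝ} (hx : ∀ i, -1 ≤ x i) {a b m : ℝ}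
    (ha : 0 ≤ a) (hab : a ≤ b) (hb : b ≤ 1)
    (hm : ∀ ε ∈ Ioo a b, m ≤ (∏ i ∈ Finset.range n, (1 + ε * x i)) * π ε) :
    m * (b - a) ≤ K π x n :=
  mul_sub_le_setIntegral hab (Ioo_subset_Ioo ha hb) measurableSet_Ioo
    (integrableOn_prod_one_add_mul_mul _ x hπ) (fun ε hε => mul_nonneg
      (prod_one_add_mul_nonneg _ (fun i _ => hx i) hε.1.le hε.2.le)
      (hπ0 ε (Ioo_subset_Icc_self hε))) hm

theorem basic_inequality_general (π : ℝ → ℝ) (επ δπ : ℝ) (hπ : Assumption1 π επ δπ)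
    (n : ℕ) (x : ℕ → ℝ) (hx : ∀ i, -1 ≤ x i)
    (C : ℝ) (hC : C ∈ Set.Ioo 0 (min επ (1 / 2)))
    (hpos : 0 < S x n / A2 x n) (hup : S x n / A2 x n < C / 2) :
    Real.sqrt C / 6 * (S x n / A2 x n) * π (S x n / A2 x n) *
      Real.exp ((1 - 2 * C) * (S x n) ^ 2 / (2 * A2 x n)) ≤ K π x n := by
  obtain ⟨-, -, hπ0, hπint, -, hmono⟩ := hπ
  have hCεπ : C < επ := hC.2.trans_le (min_le_left _ _)
  have hC2 : C < 1 / 2 := hC.2.trans_le (min_le_right _ _)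
  have hA : 0 < A2 x n := (Finset.sum_nonneg fun i _ => sq_nonneg (x i) : 0 ≤ A2 x n).lt_of_ne
    fun h => by simp [A2, ← h] at hpos
  have hr : √C < 3 / 4 := (Real.sqrt_lt' (by norm_num)).2 (by linarith)
  set t := S x n / A2 x n
  have hu : 0 ≤ √C / 6 ∧ √C / 6 < 1 / 8 := ⟨by positivity, by linarith⟩
  set u := √C / 6
  set R := (1 - 2 * C) * (S x n) ^ 2 / (2 * A2 x n)
  have hπt : 0 ≤ π t := hπ0 t ⟨hpos.le, by linarith⟩
  -- `b` is chosen so that `(1 - u) * (b - t) = u * t`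
  set b := t / (1 - u) with hb
  have htb : t ≤ b := le_div_self hpos.le (by linarith) (by linarith)
  have hbC : b < C := by rw [div_lt_iff₀ (by linarith)]; nlinarith
  have hbound : ∀ ε ∈ Ioo t b,
      Real.exp R * ((1 - u) * π t) ≤ (∏ i ∈ Finset.range n, (1 + ε * x i)) * π ε := by
    rintro ε ⟨htε, hεb⟩
    have hεt : ε * (1 - u) ≤ t := ((lt_div_iff₀ (by linarith)).1 hεb).le
    exact mul_le_mul (exp_one_sub_two_mul_sq_div_le_prod n x hx hC2 hA hpos hup htε.le hεt)
      (one_sub_mul_le_of_monotoneOn_mul hmono hpos htε.le (by linarith) hπt hεt)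
      (mul_nonneg (by linarith) hπt)
      (prod_one_add_mul_nonneg _ (fun i _ => hx i) (by linarith) (by linarith))
  calc u * t * π t * Real.exp R = Real.exp R * ((1 - u) * π t) * (b - t) := by
        rw [hb]; field_simp [(by linarith : 1 - u ≠ 0)]; ring
    _ ≤ K π x n := mul_sub_le_K hπ0 hπint n hx hpos.le htb (by linarith) hbound

theorem basic_inequality (π : ℝ → ℝ) (επ δπ : ℝ) (hπ : Assumption1 π επ δπ)
    (n : ℕ) (hn : 1 ≤ n) (x : ℕ → ℝ) (hx : ∀ i, -1 ≤ x i)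
    (C : ℝ) (hC : C ∈ Set.Ioo 0 (min επ (1 / 2)))
    (hpos : 0 < S x n / A2 x n) (hup : S x n / A2 x n < C / 2) :
    Real.sqrt C / 6 * (S x n / A2 x n) * π (S x n / A2 x n) *
      Real.exp ((1 - 2 * C) * (S x n) ^ 2 / (2 * A2 x n)) ≤ K π x n :=
  basic_inequality_general π επ δπ hπ n x hx C hC hpos hup
end

section
/- Let π be the uniform prior, π(ε) = 1 for ε ∈ (0,1), and let x : ℕ → ℝ satisfy x_i ≥ -1 for all i. If Σ_{i=1}^∞ x_i² = ∞ and limsup_{n→∞} S_n/√(A_n²·ln(A_n²)) > 1, then limsup_{n→∞} K_n^π = ∞. -/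
/-! For `0 ≤ ε ≤ θ < 1` the bound `log (1 + u) ≥ u - u² / (2 (1 - θ))` on `u ≥ -θ` gives
`∏ (1 + ε xᵢ) ≥ exp (ε Sₙ - ε² Aₙ² / (2 (1 - θ)))`. Integrating over the window
`[(1 - θ) ε₀, ε₀]` just below the maximiser `ε₀ = min ((1 - θ) Sₙ / Aₙ², θ)` of this exponent
gives `Kₙ ≥ θ ε₀ exp ((1 - θ²) ε₀ Sₙ / 2)`. Whenever `Sₙ ≥ c √(Aₙ² ln Aₙ²)` with `c > 1`, this is
at least `θ² exp ((1 - θ²) θ² Aₙ² / 2)` or `θ (1 - θ) (Aₙ²) ^ (((1 - θ²) (1 - θ) c² - 1) / 2)`,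
and both tend to infinity once `θ` is so small that `(1 - θ²) (1 - θ) c² > 1`. -/

open MeasureTheory Filter Set

open Real Topology

lemma hasDerivAt_log_one_add_sub_add_sq {θ v : ℝ} (hθ : θ < 1) (hv : -1 < v) :
    HasDerivAt (fun u ↦ log (1 + u) - u + u ^ 2 / (2 * (1 - θ)))
      (v * (v + θ) / ((1 - θ) * (1 + v))) v := by
  have hlog : HasDerivAt (fun u ↦ log (1 + u)) (1 + v)⁻¹ v := by
    simpa using ((hasDerivAt_id v).const_add 1).log (by linarith : 1 + v ≠ 0)
  have hsq : HasDerivAt (fun u : ℝ ↦ u ^ 2 / (2 * (1 - θ))) (2 * v / (2 * (1 - θ))) v := by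
    simpa using (hasDerivAt_pow 2 v).div_const (2 * (1 - θ))
  refine ((hlog.sub (hasDerivAt_id' v)).add hsq).congr_deriv ?_
  have : 1 - θ ≠ 0 := by linarith
  have : 1 + v ≠ 0 := by linarith
  field_simp
  ring

lemma sub_sq_div_le_log_one_add_s3 {θ u : ℝ} (hθ0 : 0 ≤ θ) (hθ1 : θ < 1) (hu : -θ ≤ u) :
    u - u ^ 2 / (2 * (1 - θ)) ≤ log (1 + u) := by
  set g : ℝ → ℝ := fun u ↦ log (1 + u) - u + u ^ 2 / (2 * (1 - θ))
  suffices g 0 ≤ g u by norm_num [g] at this; linarith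
  have hg : ∀ v, -θ ≤ v → HasDerivAt g (v * (v + θ) / ((1 - θ) * (1 + v))) v :=
    fun v hv ↦ hasDerivAt_log_one_add_sub_add_sq hθ1 (by linarith)
  have hcont : ∀ D ⊆ Ici (-θ), ContinuousOn g D :=
    fun D hD v hv ↦ (hg v (hD hv)).continuousAt.continuousWithinAt
  rcases le_total u 0 with hu0 | hu0
  · refine antitoneOn_of_hasDerivWithinAt_nonpos (convex_Icc (-θ) 0)
      (hcont _ fun v hv ↦ hv.1) (fun v hv ↦ (hg v ?_).hasDerivWithinAt) ?_
      ⟨hu, hu0⟩ ⟨by linarith, le_rfl⟩ hu0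
    · rw [interior_Icc] at hv; exact hv.1.le
    · intro v hv
      rw [interior_Icc] at hv
      exact div_nonpos_of_nonpos_of_nonneg
        (mul_nonpos_of_nonpos_of_nonneg hv.2.le (by linarith [hv.1])) (by nlinarith [hv.1])
  · refine monotoneOn_of_hasDerivWithinAt_nonneg (convex_Ici 0)
      (hcont _ (Ici_subset_Ici.2 (neg_nonpos.2 hθ0))) (fun v hv ↦ (hg v ?_).hasDerivWithinAt) ?_
      self_mem_Ici hu0 hu0
    · rw [interior_Ici] at hv; exact le_trans (by linarith) hv.le
    · intro v hv
      rw [interior_Ici] at hv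
      have hv : 0 < v := hv
      positivity

section CapitalBounds

variable {x : ℕ → ℝ} {n : ℕ}

lemma exp_le_prod_one_add_mul_s3 (hx : ∀ i, -1 ≤ x i) {θ ε : ℝ} (hθ : θ < 1) (hε0 : 0 ≤ ε)
    (hεθ : ε ≤ θ) :
    exp (ε * S x n - ε ^ 2 * A2 x n / (2 * (1 - θ))) ≤ ∏ i ∈ Finset.range n, (1 + ε * x i) := by
  have hsum : ε * S x n - ε ^ 2 * A2 x n / (2 * (1 - θ))
      = ∑ i ∈ Finset.range n, (ε * x i - (ε * x i) ^ 2 / (2 * (1 - θ))) := by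
    simp only [S, A2, Finset.sum_sub_distrib, Finset.mul_sum, Finset.sum_div, mul_pow]
  rw [hsum, exp_sum]
  refine Finset.prod_le_prod (fun i _ ↦ (exp_pos _).le) fun i _ ↦ ?_
  have hεx : -θ ≤ ε * x i := by nlinarith [hx i]
  rw [← le_log_iff_exp_le (by linarith)]
  exact sub_sq_div_le_log_one_add_s3 (hε0.trans hεθ) hθ hεx

lemma mul_le_K_one (hx : ∀ i, -1 ≤ x i) {a b m : ℝ} (ha : 0 < a) (hab : a ≤ b) (hb : b < 1)
    (hm : ∀ ε ∈ Icc a b, m ≤ ∏ i ∈ Finset.range n, (1 + ε * x i)) :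
    (b - a) * m ≤ K (fun _ ↦ 1) x n := by
  set P : ℝ → ℝ := fun ε ↦ ∏ i ∈ Finset.range n, (1 + ε * x i)
  have hP : IntegrableOn P (Ioo 0 1) :=
    (continuous_finsetProd _ fun i _ ↦ by fun_prop).integrableOn_Icc.mono_set Ioo_subset_Icc_self
  have hsub : Icc a b ⊆ Ioo 0 1 := fun ε hε ↦ ⟨ha.trans_le hε.1, hε.2.trans_lt hb⟩
  calc (b - a) * m = ∫ _ in Icc a b, m := by
        rw [setIntegral_const, Real.volume_real_Icc_of_le hab, smul_eq_mul]
    _ ≤ ∫ ε in Icc a b, P ε :=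
        setIntegral_mono_on (integrableOn_const measure_Icc_lt_top.ne) (hP.mono_set hsub)
          measurableSet_Icc hm
    _ ≤ ∫ ε in Ioo 0 1, P ε := by
        refine setIntegral_mono_set hP ?_ hsub.eventuallyLE
        filter_upwards [ae_restrict_mem measurableSet_Ioo] with ε hε
        exact Finset.prod_nonneg fun i _ ↦ by nlinarith [hx i, hε.1, hε.2]
    _ = K (fun _ ↦ 1) x n := by simp only [K, P, mul_one]

lemma le_mul_sub_sq_div_of_mem_Icc {S A θ η ε₀ ε : ℝ} (hθ : θ < 1) (hA : 0 ≤ A) (hε₀ : 0 < ε₀)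
    (hε₀A : ε₀ * A ≤ (1 - θ) * S) (hε : ε ∈ Icc ((1 - η) * ε₀) ε₀) :
    (1 - η ^ 2) * ε₀ * S / 2 ≤ ε * S - ε ^ 2 * A / (2 * (1 - θ)) := by
  have h1θ : 0 < 1 - θ := by linarith
  have hS : 0 ≤ S := by nlinarith
  have hquad : ε ^ 2 * A / (2 * (1 - θ)) ≤ ε ^ 2 * S / (2 * ε₀) := by
    rw [div_le_div_iff₀ (by positivity) (by positivity)]
    nlinarith [mul_le_mul_of_nonneg_left hε₀A (sq_nonneg ε)]
  have hdev : (ε₀ - ε) ^ 2 ≤ (η * ε₀) ^ 2 :=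
    pow_le_pow_left₀ (by linarith [hε.2]) (by nlinarith [hε.1]) 2
  have hkey : (1 - η ^ 2) * ε₀ * S / 2 ≤ ε * S - ε ^ 2 * S / (2 * ε₀) := by
    rw [show ε * S - ε ^ 2 * S / (2 * ε₀) = S * (ε₀ ^ 2 - (ε₀ - ε) ^ 2) / (2 * ε₀) by
      field_simp; ring]
    rw [le_div_iff₀ (by positivity)]
    nlinarith [mul_le_mul_of_nonneg_left hdev hS]
  linarith

lemma mul_exp_le_K_one (hx : ∀ i, -1 ≤ x i) {θ ε₀ : ℝ} (hθ1 : θ < 1) (hε₀ : 0 < ε₀)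
    (hε₀θ : ε₀ ≤ θ) (hε₀A : ε₀ * A2 x n ≤ (1 - θ) * S x n) :
    θ * ε₀ * exp ((1 - θ ^ 2) * ε₀ * S x n / 2) ≤ K (fun _ ↦ 1) x n := by
  have hθ0 : 0 < θ := hε₀.trans_le hε₀θ
  have hA : 0 ≤ A2 x n := Finset.sum_nonneg fun i _ ↦ sq_nonneg (x i)
  have hwindow := mul_le_K_one (n := n) (m := exp ((1 - θ ^ 2) * ε₀ * S x n / 2)) hx
    (by positivity : 0 < (1 - θ) * ε₀) (by nlinarith) (hε₀θ.trans_lt hθ1) fun ε hε ↦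
      (exp_le_exp.2 (le_mul_sub_sq_div_of_mem_Icc hθ1 hA hε₀ hε₀A hε)).trans
        (exp_le_prod_one_add_mul_s3 hx hθ1 (le_trans (by nlinarith) hε.1) (hε.2.trans hε₀θ))
  rwa [show ε₀ - (1 - θ) * ε₀ = θ * ε₀ by ring] at hwindow

lemma min_le_K_one (hx : ∀ i, -1 ≤ x i) {c θ : ℝ} (hc : 1 ≤ c) (hθ0 : 0 < θ) (hθ1 : θ < 1)
    (hA : exp 1 ≤ A2 x n) (hS : c ≤ S x n / √(A2 x n * log (A2 x n))) :
    min (θ ^ 2 * exp ((1 - θ ^ 2) * θ ^ 2 * A2 x n / 2))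
      (θ * (1 - θ) * exp (((1 - θ ^ 2) * (1 - θ) * c ^ 2 - 1) / 2 * log (A2 x n)))
      ≤ K (fun _ ↦ 1) x n := by
  set A := A2 x n
  set L := log A
  have hA0 : 0 < A := (exp_pos 1).trans_le hA
  have hL : 1 ≤ L := by simpa using log_le_log (exp_pos 1) hA
  have hsqrtA : √A = exp (L / 2) := by rw [exp_half, exp_log hA0]
  have hS' : c * (√A * √L) ≤ S x n := by
    rwa [le_div_iff₀ (by positivity), sqrt_mul hA0.le] at hS
  have hS0 : 0 < S x n := lt_of_lt_of_le (by positivity) hS'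
  rcases le_total θ ((1 - θ) * S x n / A) with hθS | hθS
  · rw [le_div_iff₀ hA0] at hθS
    refine (min_le_left _ _).trans (le_trans ?_ (mul_exp_le_K_one hx hθ1 hθ0 le_rfl hθS))
    have hθA : θ * A ≤ S x n := by nlinarith
    rw [← sq]
    gcongr θ ^ 2 * exp ?_
    nlinarith [mul_le_mul_of_nonneg_left hθA (by nlinarith : 0 ≤ (1 - θ ^ 2) * θ)]
  · set ε₀ := (1 - θ) * S x n / A with hε₀_def
    have hε₀ : 0 < ε₀ := by
      have : 0 < 1 - θ := by linarith
      positivity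
    refine (min_le_right _ _).trans (le_trans ?_ (mul_exp_le_K_one hx hθ1 hε₀ hθS
      (by rw [div_mul_cancel₀ _ hA0.ne'])))
    have hε₀A : (1 - θ) * exp (-(L / 2)) ≤ ε₀ := by
      have hSA : √A ≤ S x n := calc
        √A = 1 * (√A * 1) := by ring
        _ ≤ c * (√A * √L) := by gcongr; exact one_le_sqrt.2 hL
        _ ≤ S x n := hS'
      rw [exp_neg, ← hsqrtA, hε₀_def, mul_div_assoc]
      gcongr
      rw [inv_eq_one_div, div_le_div_iff₀ (by positivity) hA0]
      nlinarith [mul_self_sqrt hA0.le, mul_le_mul_of_nonneg_right hSA (sqrt_nonneg A)]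
    have hε₀S : (1 - θ) * c ^ 2 * L ≤ ε₀ * S x n := by
      have hS2 : c ^ 2 * (A * L) ≤ S x n ^ 2 := by
        have := pow_le_pow_left₀ (by positivity) hS' 2
        rwa [mul_pow, mul_pow, sq_sqrt hA0.le, sq_sqrt (by linarith)] at this
      calc (1 - θ) * c ^ 2 * L = (1 - θ) * (c ^ 2 * (A * L)) / A := by field_simp
        _ ≤ (1 - θ) * S x n ^ 2 / A := by gcongr
        _ = ε₀ * S x n := by rw [hε₀_def]; ring
    calc θ * (1 - θ) * exp (((1 - θ ^ 2) * (1 - θ) * c ^ 2 - 1) / 2 * L)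
        = θ * ((1 - θ) * exp (-(L / 2))) * exp ((1 - θ ^ 2) * ((1 - θ) * c ^ 2 * L) / 2) := by
          rw [mul_assoc θ (1 - θ), mul_assoc θ ((1 - θ) * _), mul_assoc (1 - θ), ← exp_add]
          ring_nf
      _ ≤ θ * ε₀ * exp ((1 - θ ^ 2) * (ε₀ * S x n) / 2) := by
          have : 0 ≤ 1 - θ ^ 2 := by nlinarith
          gcongr
      _ = θ * ε₀ * exp ((1 - θ ^ 2) * ε₀ * S x n / 2) := by rw [mul_assoc (1 - θ ^ 2)]

end CapitalBounds

lemma limsup_coe_eq_top_of_frequently_le {α : Type*} {l : Filter α} {f u : α → ℝ}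
    (hf : Tendsto f l atTop) (hfu : ∃ᶠ a in l, f a ≤ u a) :
    limsup (fun a ↦ (u a : EReal)) l = ⊤ := by
  refine EReal.eq_top_iff_forall_lt _ |>.2 fun M ↦ ?_
  have hM : ((M + 1 : ℝ) : EReal) ≤ limsup (fun a ↦ (u a : EReal)) l :=
    le_limsup_of_frequently_le' <| (hfu.and_eventually (hf.eventually_ge_atTop (M + 1))).mono
      fun a ha ↦ EReal.coe_le_coe_iff.2 (ha.2.trans ha.1)
  exact (EReal.coe_lt_coe_iff.2 (lt_add_one M)).trans_le hM

theorem uniform_prior_rate (x : ℕ → ℝ) (hx : ∀ i, -1 ≤ x i)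
    (hA : Filter.Tendsto (A2 x) Filter.atTop Filter.atTop)
    (hls : 1 < Filter.limsup
      (fun n => ((S x n / Real.sqrt (A2 x n * Real.log (A2 x n)) : ℝ) : EReal))
      Filter.atTop) :
    Filter.limsup (fun n => ((K (fun _ => (1 : ℝ)) x n : ℝ) : EReal)) Filter.atTop = ⊤ := by
  obtain ⟨c, hc1, hc⟩ := EReal.lt_iff_exists_real_btwn.1 hls
  replace hc1 : 1 < c := by exact_mod_cast hc1
  have hfreq : ∃ᶠ n in atTop, c ≤ S x n / √(A2 x n * log (A2 x n)) :=
    (frequently_lt_of_lt_limsup (by isBoundedDefault) hc).mono fun n hn ↦ by exact_mod_cast hn.le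
  have hκ : ∀ᶠ θ in 𝓝 (0 : ℝ), 1 < (1 - θ ^ 2) * (1 - θ) * c ^ 2 :=
    continuousAt_const.eventually_lt (by fun_prop) (by simpa using one_lt_pow₀ hc1 two_ne_zero)
  obtain ⟨θ, hθc, hθ0, hθ1⟩ :=
    ((hκ.filter_mono nhdsWithin_le_nhds).and (Ioo_mem_nhdsGT one_pos)).exists
  have hrate : 0 < (1 - θ ^ 2) * θ ^ 2 := mul_pos (by nlinarith) (by positivity)
  have hexp : Tendsto (fun a ↦ θ ^ 2 * exp ((1 - θ ^ 2) * θ ^ 2 * a / 2)) atTop atTop :=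
    (tendsto_exp_atTop.comp ((tendsto_id.const_mul_atTop hrate).atTop_div_const two_pos))
      |>.const_mul_atTop (by positivity)
  have hpow : Tendsto (fun a ↦ θ * (1 - θ) * exp (((1 - θ ^ 2) * (1 - θ) * c ^ 2 - 1) / 2 * log a))
      atTop atTop :=
    (tendsto_exp_atTop.comp (tendsto_log_atTop.const_mul_atTop (by linarith))).const_mul_atTop
      (by nlinarith)
  exact limsup_coe_eq_top_of_frequently_le ((tendsto_inf_atTop _ hexp hpow).comp hA)
    ((hfreq.and_eventually (hA.eventually_ge_atTop (exp 1))).mono fun n hn ↦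
      min_le_K_one hx hc1.le hθ0 hθ1 hn.2 hn.1)
end

section
/- Let ψ_1 and ψ_2 satisfy Assumption 2 and suppose 0 < liminf_{λ→∞} exp(ψ_2(λ)²/2)/exp(ψ_1(λ)²/2) ≤ limsup_{λ→∞} exp(ψ_2(λ)²/2)/exp(ψ_1(λ)²/2) < ∞. Then 0 < liminf_{ε↓0} F[ψ_2](ε)/F[ψ_1](ε) ≤ limsup_{ε↓0} F[ψ_2](ε)/F[ψ_1](ε) < ∞. -/
open MeasureTheory Filter Set

/-- Assumption 2: `ψ` is positive and increasing on `(M,∞)`, the integral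
`∫_M^∞ ψ(λ) e^{-ψ(λ)²/2} dλ/λ` is finite, and `λ ψ(λ) e^{-ψ(λ)²/2} > δ` on `(M,∞)`. -/
def Assumption2 (ψ : ℝ → ℝ) (M δ : ℝ) : Prop :=
  0 < M ∧ 0 < δ ∧
  (∀ l ∈ Set.Ioi M, 0 < ψ l) ∧
  MonotoneOn ψ (Set.Ioi M) ∧
  MeasureTheory.IntegrableOn (fun l => ψ l * Real.exp (-(ψ l) ^ 2 / 2) / l) (Set.Ioi M) ∧
  (∀ l ∈ Set.Ioi M, δ < l * ψ l * Real.exp (-(ψ l) ^ 2 / 2))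

/-- The functional `F[ψ](ε) = (ψ(1/ε)/ε)·exp(-ψ(1/ε)²/2)`. -/
noncomputable def Ffun (ψ : ℝ → ℝ) (ε : ℝ) : ℝ :=
  ψ (1 / ε) / ε * Real.exp (-(ψ (1 / ε)) ^ 2 / 2)

/-- `β(ε) = max(-2 ln(ε π(ε)), 1)`. -/
noncomputable def betaFun (π : ℝ → ℝ) (ε : ℝ) : ℝ :=
  max (-2 * Real.log (ε * π ε)) 1

/-- The functional `G[π](λ) = √(β(1/λ) + ln β(1/λ))`. -/
noncomputable def Gfun (π : ℝ → ℝ) (l : ℝ) : ℝ :=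
  Real.sqrt (betaFun π (1 / l) + Real.log (betaFun π (1 / l)))

/-!
Each `ψᵢ` tends to infinity, since otherwise the integrand of Assumption 2 would dominate a
multiple of `1 / λ`. Writing `r = e^{ψ₂²/2} / e^{ψ₁²/2}`, one has
`F[ψ₂](ε) / F[ψ₁](ε) = (ψ₂ / ψ₁)(1/ε) / r(1/ε)`. The hypothesis says `r ≍ 1`, i.e. that
`ψ₂² - ψ₁² = 2 log r` is bounded; as `ψ₁ → ∞` this forces `ψ₂ / ψ₁ → 1`, so the ratio of the
`F`'s is `≍ 1` as `ε ↓ 0`.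
-/

open Asymptotics Topology

theorem Assumption2.tendsto_atTop {ψ : ℝ → ℝ} {M δ : ℝ} (h : Assumption2 ψ M δ) :
    Tendsto ψ atTop atTop := by
  obtain ⟨hM, -, hpos, hmono, hint, -⟩ := h
  by_contra hnot
  rw [tendsto_atTop_atTop] at hnot
  push Not at hnot
  obtain ⟨b, hb⟩ := hnot
  have hψb : ∀ l ∈ Ioi M, ψ l < b := fun l hl ↦
    let ⟨n, hln, hn⟩ := hb l
    (hmono hl (hl.trans_le hln) hln).trans_lt hn
  have hM1 : M + 1 ∈ Ioi M := by simp
  set c := ψ (M + 1) * Real.exp (-b ^ 2 / 2)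
  have hc : 0 < c := mul_pos (hpos _ hM1) (Real.exp_pos _)
  refine not_integrableOn_Ioi_inv (a := M + 1)
    (((hint.mono_set (Ioi_subset_Ioi (by linarith))).const_mul c⁻¹).mono'
      measurable_inv.aestronglyMeasurable ?_)
  filter_upwards [ae_restrict_mem measurableSet_Ioi] with l (hl : M + 1 < l)
  have hl0 : 0 < l := by linarith
  have hlM : l ∈ Ioi M := mem_Ioi.mpr (by linarith)
  have hexp : Real.exp (-b ^ 2 / 2) ≤ Real.exp (-ψ l ^ 2 / 2) :=
    Real.exp_le_exp.mpr (by nlinarith [hψb l hlM, hpos l hlM])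
  have hc_le : c ≤ ψ l * Real.exp (-ψ l ^ 2 / 2) :=
    mul_le_mul (hmono hM1 hlM hl.le) hexp (Real.exp_pos _).le (hpos l hlM).le
  rw [Real.norm_of_nonneg (inv_nonneg.mpr hl0.le), le_inv_mul_iff₀ hc, ← div_eq_mul_inv]
  exact div_le_div_of_nonneg_right hc_le hl0.le

theorem isTheta_one_iff_liminf_pos_and_limsup_lt_top {α : Type*} {l : Filter α} {f : α → ℝ}
    (hf : ∀ᶠ x in l, 0 < f x) :
    f =Θ[l] (fun _ ↦ (1 : ℝ)) ↔
      0 < liminf (fun x ↦ (f x : EReal)) l ∧ limsup (fun x ↦ (f x : EReal)) l < ⊤ := by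
  constructor
  · rintro ⟨hupper, hlower⟩
    obtain ⟨C, hC⟩ := (isBigO_one_iff ℝ).1 hupper
    obtain ⟨c, hc, hc'⟩ := hlower.exists_pos
    refine ⟨(EReal.coe_pos.mpr (inv_pos.mpr hc)).trans_le (le_liminf_of_le (h := ?_)),
      (limsup_le_of_le (h := ?_)).trans_lt (EReal.coe_lt_top C)⟩
    · filter_upwards [hc'.bound, hf] with x hx hfx
      rw [norm_one, Real.norm_of_nonneg hfx.le] at hx
      exact EReal.coe_le_coe ((inv_le_iff_one_le_mul₀' hc).mpr hx)
    · filter_upwards [hC] with x hx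
      exact EReal.coe_le_coe ((le_abs_self _).trans hx)
  · rintro ⟨hlow, hup⟩
    obtain ⟨c, hc, hcf⟩ := EReal.lt_iff_exists_real_btwn.mp hlow
    obtain ⟨C, hfC, -⟩ := EReal.lt_iff_exists_real_btwn.mp hup
    have hc : 0 < c := EReal.coe_pos.mp hc
    have hlower : ∀ᶠ x in l, c < f x := by
      filter_upwards [eventually_lt_of_lt_liminf hcf] with x hx using EReal.coe_lt_coe_iff.mp hx
    have hupper : ∀ᶠ x in l, f x < C := by
      filter_upwards [eventually_lt_of_limsup_lt hfC] with x hx using EReal.coe_lt_coe_iff.mp hx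
    refine ⟨IsBigO.of_bound C ?_, IsBigO.of_bound c⁻¹ ?_⟩
    · filter_upwards [hlower, hupper] with x hcx hxC
      rw [norm_one, mul_one, Real.norm_of_nonneg (hc.trans hcx).le]
      exact hxC.le
    · filter_upwards [hlower] with x hcx
      rw [norm_one, Real.norm_of_nonneg (hc.trans hcx).le, le_inv_mul_iff₀ hc, mul_one]
      exact hcx.le

theorem tendsto_div_nhds_one_of_sq_sub_isBigO_one {α : Type*} {l : Filter α} {u v : α → ℝ}
    (hv : Tendsto v l atTop) (hu : ∀ᶠ x in l, 0 ≤ u x)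
    (huv : (fun x ↦ u x ^ 2 - v x ^ 2) =O[l] (fun _ ↦ (1 : ℝ))) :
    Tendsto (fun x ↦ u x / v x) l (𝓝 1) := by
  have hv_sq_inv : Tendsto (fun x ↦ (v x ^ 2)⁻¹) l (𝓝 0) :=
    ((tendsto_pow_atTop two_ne_zero).comp hv).inv_tendsto_atTop
  have hsmall : Tendsto (fun x ↦ (u x ^ 2 - v x ^ 2) * (v x ^ 2)⁻¹) l (𝓝 0) :=
    (huv.mul (isBigO_refl _ l)).trans_tendsto (by simpa only [one_mul] using hv_sq_inv)
  have hsq : Tendsto (fun x ↦ (u x / v x) ^ 2) l (𝓝 1) := by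
    refine Tendsto.congr' ?_ (by simpa only [add_zero] using hsmall.const_add 1)
    filter_upwards [hv.eventually_gt_atTop 0] with x hx
    field_simp
    ring
  refine Tendsto.congr' ?_ ((Real.continuous_sqrt.tendsto' 1 1 Real.sqrt_one).comp hsq)
  filter_upwards [hu, hv.eventually_gt_atTop 0] with x hux hvx
  exact Real.sqrt_sq (div_nonneg hux hvx.le)

theorem Assumption2.eventually_Ffun_pos {ψ : ℝ → ℝ} {M δ : ℝ} (h : Assumption2 ψ M δ) :
    ∀ᶠ ε in 𝓝[>] 0, 0 < Ffun ψ ε := by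
  filter_upwards [self_mem_nhdsWithin,
    tendsto_inv_nhdsGT_zero.eventually (h.tendsto_atTop.eventually_gt_atTop 0)] with ε hε hψ
  rw [← one_div] at hψ
  exact mul_pos (div_pos hψ hε) (Real.exp_pos _)

theorem Ffun_div_Ffun {ε : ℝ} (hε : ε ≠ 0) (ψ₁ ψ₂ : ℝ → ℝ) :
    Ffun ψ₂ ε / Ffun ψ₁ ε = ψ₂ ε⁻¹ / ψ₁ ε⁻¹ /
      (Real.exp (ψ₂ ε⁻¹ ^ 2 / 2) / Real.exp (ψ₁ ε⁻¹ ^ 2 / 2)) := by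
  simp only [Ffun, one_div, neg_div, Real.exp_neg]
  field_simp

theorem F_preserves_equivalence (ψ₁ ψ₂ : ℝ → ℝ) (M₁ δ₁ M₂ δ₂ : ℝ)
    (h₁ : Assumption2 ψ₁ M₁ δ₁) (h₂ : Assumption2 ψ₂ M₂ δ₂)
    (hlb : 0 < Filter.liminf
      (fun l => ((Real.exp ((ψ₂ l) ^ 2 / 2) / Real.exp ((ψ₁ l) ^ 2 / 2) : ℝ) : EReal))
      Filter.atTop)
    (hub : Filter.limsup
      (fun l => ((Real.exp ((ψ₂ l) ^ 2 / 2) / Real.exp ((ψ₁ l) ^ 2 / 2) : ℝ) : EReal))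
      Filter.atTop < ⊤) :
    0 < Filter.liminf (fun ε => ((Ffun ψ₂ ε / Ffun ψ₁ ε : ℝ) : EReal))
        (nhdsWithin (0 : ℝ) (Set.Ioi 0)) ∧
    Filter.limsup (fun ε => ((Ffun ψ₂ ε / Ffun ψ₁ ε : ℝ) : EReal))
        (nhdsWithin (0 : ℝ) (Set.Ioi 0)) < ⊤ := by
  set r : ℝ → ℝ := fun l ↦ Real.exp (ψ₂ l ^ 2 / 2) / Real.exp (ψ₁ l ^ 2 / 2)
  have hr : r =Θ[atTop] (fun _ ↦ (1 : ℝ)) :=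
    (isTheta_one_iff_liminf_pos_and_limsup_lt_top (.of_forall fun l ↦ by positivity)).2 ⟨hlb, hub⟩
  have hsq : (fun l ↦ ψ₂ l ^ 2 - ψ₁ l ^ 2) =O[atTop] (fun _ ↦ (1 : ℝ)) := by
    have hr_exp : r = fun l ↦ Real.exp ((ψ₂ l ^ 2 - ψ₁ l ^ 2) / 2) := by
      simp only [r, ← Real.exp_sub, sub_div]
    rw [hr_exp, Real.isTheta_exp_comp_one] at hr
    have hhalf := (isBigO_one_iff ℝ (f := fun l ↦ (ψ₂ l ^ 2 - ψ₁ l ^ 2) / 2)).2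
      (by simpa only [Real.norm_eq_abs] using hr)
    simpa only [mul_div_cancel₀ _ (two_ne_zero' ℝ)] using hhalf.const_mul_left 2
  have hψ : Tendsto (fun l ↦ ψ₂ l / ψ₁ l) atTop (𝓝 1) :=
    tendsto_div_nhds_one_of_sq_sub_isBigO_one h₁.tendsto_atTop
      (h₂.tendsto_atTop.eventually_ge_atTop 0) hsq
  have hratio : (fun l ↦ ψ₂ l / ψ₁ l / r l) =Θ[atTop] (fun _ ↦ (1 : ℝ)) := by
    simpa only [div_one] using (isTheta_of_div_tendsto_nhds_ne_zero
      (f := fun _ ↦ (1 : ℝ)) (by simpa only [div_one] using hψ) one_ne_zero).symm.div hr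
  have hF : (fun ε ↦ Ffun ψ₂ ε / Ffun ψ₁ ε) =Θ[𝓝[>] 0] (fun _ ↦ (1 : ℝ)) := by
    refine EventuallyEq.trans_isTheta ?_ ⟨hratio.1.comp_tendsto tendsto_inv_nhdsGT_zero,
      hratio.2.comp_tendsto tendsto_inv_nhdsGT_zero⟩
    filter_upwards [self_mem_nhdsWithin] with ε hε using Ffun_div_Ffun hε.ne' ψ₁ ψ₂
  exact (isTheta_one_iff_liminf_pos_and_limsup_lt_top
    (by filter_upwards [h₂.eventually_Ffun_pos, h₁.eventually_Ffun_pos] with ε using div_pos)).1 hF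
end

section
/- Let π_1 and π_2 satisfy Assumption 1 and suppose 0 < liminf_{ε↓0} π_2(ε)/π_1(ε) ≤ limsup_{ε↓0} π_2(ε)/π_1(ε) < ∞. Then 0 < liminf_{λ→∞} exp(G[π_2](λ)²/2)/exp(G[π_1](λ)²/2) ≤ limsup_{λ→∞} exp(G[π_2](λ)²/2)/exp(G[π_1](λ)²/2) < ∞. -/
open MeasureTheory Filter Set

/-!
The ratio in question is `exp((G[π₂]² - G[π₁]²)/2)` and `G[π]² = β + ln β`. Since `x ↦ max(x, 1)`
is 1-Lipschitz, `|β₂(ε) - β₁(ε)| ≤ 2 |ln(π₂(ε)/π₁(ε))|`, and since `ln` is 1-Lipschitz on `[1, ∞)`,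
`|G[π₂]² - G[π₁]²| ≤ 2 |β₂ - β₁|`. Hence a two-sided bound on `π₂/π₁` near `0⁺` gives a two-sided
bound on the ratio of exponentials as `λ → ∞`.
-/

open Real

lemma liminf_pos_and_limsup_lt_top_iff {α : Type*} {l : Filter α} [l.NeBot] {f : α → ℝ} :
    (0 < liminf (fun x => (f x : EReal)) l ∧ limsup (fun x => (f x : EReal)) l < ⊤) ↔
      ∃ K, ∀ᶠ x in l, 0 < f x ∧ |log (f x)| ≤ K := by
  constructor
  · rintro ⟨hlb, hub⟩
    obtain ⟨a, ha0, haL⟩ := exists_between hlb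
    obtain ⟨b, hbL, hbT⟩ := exists_between hub
    lift a to ℝ using ⟨haL.trans_le le_top |>.ne, (EReal.bot_lt_zero.trans ha0).ne'⟩
    have hb : b ≠ ⊥ := ((EReal.bot_lt_zero.trans (hlb.trans_le liminf_le_limsup)).trans hbL).ne'
    lift b to ℝ using ⟨hbT.ne, hb⟩
    refine ⟨|log a| + |log b|, ?_⟩
    filter_upwards [eventually_lt_of_lt_liminf haL, eventually_lt_of_limsup_lt hbL]
      with x hax hxb
    have ha : 0 < a := EReal.coe_pos.mp ha0
    have hax : a < f x := EReal.coe_lt_coe_iff.mp hax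
    have hxb : f x < b := EReal.coe_lt_coe_iff.mp hxb
    have hx : 0 < f x := ha.trans hax
    refine ⟨hx, abs_le.mpr ⟨?_, ?_⟩⟩
    · linarith [log_le_log ha hax.le, neg_abs_le (log a), abs_nonneg (log b)]
    · linarith [log_le_log hx hxb.le, le_abs_self (log b), abs_nonneg (log a)]
  · rintro ⟨K, hK⟩
    have hbounds : ∀ᶠ x in l, (exp (-K) : EReal) ≤ f x ∧ (f x : EReal) ≤ exp K := by
      filter_upwards [hK] with x ⟨hx, hxK⟩
      rw [EReal.coe_le_coe_iff, EReal.coe_le_coe_iff, ← exp_log hx, exp_le_exp, exp_le_exp]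
      exact ⟨by linarith [neg_abs_le (log (f x))], by linarith [le_abs_self (log (f x))]⟩
    constructor
    · calc (0 : EReal) < exp (-K) := EReal.coe_pos.mpr (exp_pos _)
        _ = liminf (fun _ => (exp (-K) : EReal)) l := liminf_const _ |>.symm
        _ ≤ liminf (fun x => (f x : EReal)) l := liminf_le_liminf (hbounds.mono fun _ h => h.1)
    · calc limsup (fun x => (f x : EReal)) l ≤ limsup (fun _ => (exp K : EReal)) l :=
            limsup_le_limsup (hbounds.mono fun _ h => h.2)
        _ = exp K := limsup_const _
        _ < ⊤ := EReal.coe_lt_top _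

lemma abs_log_sub_log_le_of_one_le {x y : ℝ} (hx : 1 ≤ x) (hy : 1 ≤ y) :
    |log x - log y| ≤ |x - y| := by
  wlog hxy : y ≤ x generalizing x y
  · rw [abs_sub_comm, abs_sub_comm x]
    exact this hy hx (le_of_not_ge hxy)
  have hy0 : 0 < y := by linarith
  calc |log x - log y| = log (x / y) := by
        rw [log_div (by positivity) hy0.ne', abs_of_nonneg (by linarith [log_le_log hy0 hxy])]
    _ ≤ x / y - 1 := log_le_sub_one_of_pos (by positivity)
    _ = (x - y) / y := by field_simp
    _ ≤ x - y := div_le_self (by linarith) hy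
    _ = |x - y| := (abs_of_nonneg (by linarith)).symm

lemma abs_add_log_sub_add_log_le {x y : ℝ} (hx : 1 ≤ x) (hy : 1 ≤ y) :
    |(x + log x) - (y + log y)| ≤ 2 * |x - y| := by
  calc |(x + log x) - (y + log y)| = |(x - y) + (log x - log y)| := by ring_nf
    _ ≤ |x - y| + |log x - log y| := abs_add_le _ _
    _ ≤ 2 * |x - y| := by linarith [abs_log_sub_log_le_of_one_le hx hy]

lemma betaFun_one_le (p : ℝ → ℝ) (ε : ℝ) : 1 ≤ betaFun p ε := le_max_right _ _

lemma abs_betaFun_sub_betaFun_le {π₁ π₂ : ℝ → ℝ} {ε : ℝ} (hε : ε ≠ 0)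
    (h : π₂ ε / π₁ ε ≠ 0) :
    |betaFun π₂ ε - betaFun π₁ ε| ≤ 2 * |log (π₂ ε / π₁ ε)| := by
  obtain ⟨h₂, h₁⟩ := div_ne_zero_iff.mp h
  have hlog : -2 * log (ε * π₂ ε) - -2 * log (ε * π₁ ε) = -2 * log (π₂ ε / π₁ ε) := by
    rw [log_mul hε h₂, log_mul hε h₁, log_div h₂ h₁]
    ring
  calc |betaFun π₂ ε - betaFun π₁ ε| ≤ |-2 * log (ε * π₂ ε) - -2 * log (ε * π₁ ε)| :=
        abs_max_sub_max_le_abs _ _ _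
    _ = 2 * |log (π₂ ε / π₁ ε)| := by rw [hlog, abs_mul]; norm_num

lemma Gfun_sq (p : ℝ → ℝ) (l : ℝ) :
    Gfun p l ^ 2 = betaFun p (1 / l) + log (betaFun p (1 / l)) :=
  sq_sqrt (by linarith [betaFun_one_le p (1 / l), log_nonneg (betaFun_one_le p (1 / l))])

lemma abs_Gfun_sq_sub_Gfun_sq_le {π₁ π₂ : ℝ → ℝ} {l : ℝ} (hl : l ≠ 0)
    (h : π₂ (1 / l) / π₁ (1 / l) ≠ 0) :
    |Gfun π₂ l ^ 2 - Gfun π₁ l ^ 2| ≤ 4 * |log (π₂ (1 / l) / π₁ (1 / l))| := by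
  rw [Gfun_sq, Gfun_sq]
  calc _ ≤ 2 * |betaFun π₂ (1 / l) - betaFun π₁ (1 / l)| :=
        abs_add_log_sub_add_log_le (betaFun_one_le _ _) (betaFun_one_le _ _)
    _ ≤ 2 * (2 * |log (π₂ (1 / l) / π₁ (1 / l))|) := by
        gcongr; exact abs_betaFun_sub_betaFun_le (one_div_ne_zero hl) h
    _ = _ := by ring

theorem G_preserves_equivalence_general (π₁ π₂ : ℝ → ℝ)
    (hlb : 0 < Filter.liminf (fun ε => ((π₂ ε / π₁ ε : ℝ) : EReal))
      (nhdsWithin (0 : ℝ) (Set.Ioi 0)))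
    (hub : Filter.limsup (fun ε => ((π₂ ε / π₁ ε : ℝ) : EReal))
      (nhdsWithin (0 : ℝ) (Set.Ioi 0)) < ⊤) :
    0 < Filter.liminf
        (fun l => ((Real.exp ((Gfun π₂ l) ^ 2 / 2) / Real.exp ((Gfun π₁ l) ^ 2 / 2) : ℝ) : EReal))
        Filter.atTop ∧
    Filter.limsup
        (fun l => ((Real.exp ((Gfun π₂ l) ^ 2 / 2) / Real.exp ((Gfun π₁ l) ^ 2 / 2) : ℝ) : EReal))
        Filter.atTop < ⊤ := by
  obtain ⟨K, hK⟩ := liminf_pos_and_limsup_lt_top_iff.mp ⟨hlb, hub⟩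
  have hinv : Tendsto (fun l : ℝ => 1 / l) atTop (nhdsWithin 0 (Ioi 0)) := by
    simpa only [one_div] using tendsto_inv_atTop_nhdsGT_zero
  refine liminf_pos_and_limsup_lt_top_iff.mpr ⟨2 * K, ?_⟩
  filter_upwards [hinv.eventually hK, eventually_gt_atTop 0] with l ⟨hr, hrK⟩ hl
  rw [← exp_sub, log_exp, ← sub_div, abs_div, abs_two]
  refine ⟨exp_pos _, ?_⟩
  linarith [abs_Gfun_sq_sub_Gfun_sq_le hl.ne' hr.ne']

theorem G_preserves_equivalence (π₁ π₂ : ℝ → ℝ) (ε₁ δ₁ ε₂ δ₂ : ℝ)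
    (h₁ : Assumption1 π₁ ε₁ δ₁) (h₂ : Assumption1 π₂ ε₂ δ₂)
    (hlb : 0 < Filter.liminf (fun ε => ((π₂ ε / π₁ ε : ℝ) : EReal))
      (nhdsWithin (0 : ℝ) (Set.Ioi 0)))
    (hub : Filter.limsup (fun ε => ((π₂ ε / π₁ ε : ℝ) : EReal))
      (nhdsWithin (0 : ℝ) (Set.Ioi 0)) < ⊤) :
    0 < Filter.liminf
        (fun l => ((Real.exp ((Gfun π₂ l) ^ 2 / 2) / Real.exp ((Gfun π₁ l) ^ 2 / 2) : ℝ) : EReal))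
        Filter.atTop ∧
    Filter.limsup
        (fun l => ((Real.exp ((Gfun π₂ l) ^ 2 / 2) / Real.exp ((Gfun π₁ l) ^ 2 / 2) : ℝ) : EReal))
        Filter.atTop < ⊤ :=
  G_preserves_equivalence_general π₁ π₂ hlb hub
end
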